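/- arXiv:1708.00552 — 2 statements merged into one kernel-verified Lean document; each statement's English description precedes it below -/
import Mathlib

section
/- Let G be a finite simple graph with a sum labeling ℓ, let v be a vertex and let u be a vertex adjacent to v. Then there exists a natural number k ≥ 1 such that for every i with 0 ≤ i ≤ k there is a vertex x ∈ V with ℓ(x) = ℓ(u) + i·ℓ(v), and there is a proper terminal w of v (i.e. w ≠ v and w not adjacent to v) with ℓ(w) = ℓ(u) + k·ℓ(v). -/
/-- A (possibly non-injective) sum labeling of a finite simple graph `G`. -/
def IsSumLabeling {V : Type*} (G : SimpleGraph V) (ℓ : V → ℕ) : Prop :=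
  (∀ v : V, 1 ≤ ℓ v) ∧
  ∀ u v : V, u ≠ v → (G.Adj u v ↔ ∃ w : V, ℓ u + ℓ v = ℓ w)

/-!
Starting from `ℓ u` and `ℓ u + ℓ v` (a label since `u ~ v`), walk along the arithmetic
progression `ℓ u + i * ℓ v` as long as its terms are labels; finitely many labels force the
walk to stop at some `k ≥ 1`. A vertex `w` labelled `ℓ u + k * ℓ v` has a label larger than
`ℓ v`, so `w ≠ v`, and it cannot be adjacent to `v`, since then `ℓ v + ℓ w` would be a label
and the walk would continue.
-/

theorem Nat.exists_forall_le_and_not_succ {P : ℕ → Prop} (h0 : P 0) (h : ∃ n, ¬ P n) :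
    ∃ k, (∀ i ≤ k, P i) ∧ ¬ P (k + 1) := by
  classical
  have hsucc : ∃ n, ¬ P (n + 1) := by
    obtain ⟨n, hn⟩ := h
    cases n with
    | zero => exact absurd h0 hn
    | succ n => exact ⟨n, hn⟩
  refine ⟨Nat.find hsucc, fun i hi => ?_, Nat.find_spec hsucc⟩
  cases i with
  | zero => exact h0
  | succ j => exact not_not.mp (Nat.find_min hsucc (by omega))

theorem Finite.exists_forall_ne_add_mul {V : Type*} [Finite V] (f : V → ℕ) (a : ℕ) {b : ℕ}
    (hb : 0 < b) : ∃ n, ∀ x, f x ≠ a + n * b := by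
  obtain ⟨N, hN⟩ := (Set.range f).toFinite.bddAbove
  refine ⟨N + 1, fun x hx => ?_⟩
  have hfx : f x ≤ N := hN (Set.mem_range_self x)
  have : N + 1 ≤ (N + 1) * b := Nat.le_mul_of_pos_right _ hb
  omega

/-- If `u` is adjacent to `v`, then the labels `ℓ u + i * ℓ v`, for
`0 ≤ i ≤ k`, all occur in the graph, and the last one is the label of a
proper terminal of `v`. -/
theorem sequence_to_proper_terminal {V : Type*} [Fintype V]
    (G : SimpleGraph V) (ℓ : V → ℕ) (hℓ : IsSumLabeling G ℓ) (v u : V)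
    (hadj : G.Adj v u) :
    ∃ k : ℕ, 1 ≤ k ∧
      (∀ i : ℕ, i ≤ k → ∃ x : V, ℓ x = ℓ u + i * ℓ v) ∧
      (∃ w : V, w ≠ v ∧ ¬ G.Adj v w ∧ ℓ w = ℓ u + k * ℓ v) := by
  obtain ⟨hpos, hsum⟩ := hℓ
  have hadd_label : ∀ {w}, G.Adj v w → ∃ x, ℓ x = ℓ w + ℓ v := fun {w} h => by
    obtain ⟨x, hx⟩ := (hsum v w (G.ne_of_adj h)).mp h
    exact ⟨x, by omega⟩
  obtain ⟨k, hrun, hstop⟩ := Nat.exists_forall_le_and_not_succ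
    (P := fun i => ∃ x, ℓ x = ℓ u + i * ℓ v) ⟨u, by simp⟩
    (by simpa using Finite.exists_forall_ne_add_mul ℓ (ℓ u) (hpos v))
  have hk : 1 ≤ k := by
    obtain ⟨x, hx⟩ := hadd_label hadj
    rcases Nat.eq_zero_or_pos k with rfl | hk
    · exact absurd ⟨x, by simpa using hx⟩ hstop
    · exact hk
  obtain ⟨w, hw⟩ := hrun k le_rfl
  refine ⟨k, hk, hrun, w, ?_, fun hvw => ?_, hw⟩
  · rintro rfl
    have : ℓ w ≤ k * ℓ w := Nat.le_mul_of_pos_left _ hk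
    linarith [hpos u]
  · obtain ⟨x, hx⟩ := hadd_label hvw
    exact hstop ⟨x, by rw [hx, hw]; ring⟩
end

section
/- For every natural number n ≥ 39, every admissible multiplicity function m, every integer k with 2 ≤ k ≤ 6, and every vertex v ∈ ψ(k) of G(n,m): v has exactly k proper terminals (i.e. exactly k vertices w with w ≠ v and w not adjacent to v), and the first coordinates of these k proper terminals are pairwise distinct. -/
/-- `Sn n = {2,3,…,n} ∪ {n+2}`. -/
def Sn (n : ℕ) : Set ℕ := {k | (2 ≤ k ∧ k ≤ n) ∨ k = n + 2}

/-- `m` is an admissible multiplicity function for `Sn n`. -/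
def Admissible (n : ℕ) (m : ℕ → ℕ) : Prop :=
  (∀ i ∈ Sn n, 2 * i ∈ Sn n → 2 ≤ m i) ∧
  (∀ i ∈ Sn n, 2 * i ∉ Sn n → m i = 1) ∧
  (∀ i, i ∉ Sn n → m i = 0)

/-- The vertex set of `G(n,m)`: pairs `(i,j)` with `i ∈ Sn n` and `j < m i`. -/
def Vnm (n : ℕ) (m : ℕ → ℕ) : Set (ℕ × ℕ) := {p | p.1 ∈ Sn n ∧ p.2 < m p.1}

/-- Distinct vertices `u`, `v` of `G(n,m)` are adjacent iff `u.1 + v.1 ∈ Sn n`. -/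
def AdjG (n : ℕ) (u v : ℕ × ℕ) : Prop := u ≠ v ∧ u.1 + v.1 ∈ Sn n

/-- `psi m i` is the set of vertices induced by the integer `i`. -/
def psi (m : ℕ → ℕ) (i : ℕ) : Set (ℕ × ℕ) := {p | p.1 = i ∧ p.2 < m i}

/-- The set of proper terminals of a vertex `v` of `G(n,m)`. -/
def tau (n : ℕ) (m : ℕ → ℕ) (v : ℕ × ℕ) : Set (ℕ × ℕ) :=
  {w ∈ Vnm n m | w ≠ v ∧ v.1 + w.1 ∉ Sn n}

/-- A (possibly non-injective) sum labeling of the graph `G(n,m)`. -/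
def IsSumLabelingG (n : ℕ) (m : ℕ → ℕ) (ℓ : ℕ × ℕ → ℕ) : Prop :=
  (∀ v ∈ Vnm n m, 1 ≤ ℓ v) ∧
  ∀ u ∈ Vnm n m, ∀ v ∈ Vnm n m, u ≠ v →
    (AdjG n u v ↔ ∃ w ∈ Vnm n m, ℓ u + ℓ v = ℓ w)

/-!
A vertex `(k, j)` fails to be adjacent to `(i, j')` exactly when `k + i` overshoots `n` without
hitting `n + 2`, i.e. for `i ∈ (n - k, n] \ {n + 2 - k}` and for `i = n + 2`: these are `k` values.
When `2k < n` all of them exceed `n / 2 + 1`, so `2i ∉ Sn n`; admissibility then gives `m i = 1`,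
so each such `i` carries the single vertex `(i, 0)`, and that vertex differs from `(k, j)`.
-/

lemma mem_Sn {n i : ℕ} : i ∈ Sn n ↔ (2 ≤ i ∧ i ≤ n) ∨ i = n + 2 := Iff.rfl

/-- The first coordinates of the proper terminals of a vertex in `ψ(k)`. -/
def terminalIndices (n k : ℕ) : Finset ℕ :=
  (Finset.Ioc (n - k) n).erase (n + 2 - k) ∪ {n + 2}

lemma mem_terminalIndices {n k i : ℕ} :
    i ∈ terminalIndices n k ↔ (n - k < i ∧ i ≤ n ∧ i ≠ n + 2 - k) ∨ i = n + 2 := by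
  simp only [terminalIndices, Finset.mem_union, Finset.mem_erase, Finset.mem_Ioc,
    Finset.mem_singleton]
  tauto

lemma card_terminalIndices {n k : ℕ} (hk : 2 ≤ k) (hkn : k ≤ n) :
    (terminalIndices n k).card = k := by
  rw [terminalIndices, Finset.card_union_of_disjoint, Finset.card_erase_of_mem, Nat.card_Ioc,
    Finset.card_singleton]
  · omega
  · simp only [Finset.mem_Ioc]; omega
  · simp only [Finset.disjoint_singleton_right, Finset.mem_erase, Finset.mem_Ioc]; omega

lemma add_notMem_Sn_iff {n k i : ℕ} (hk : 1 ≤ k) (hi : i ∈ Sn n) :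
    k + i ∉ Sn n ↔ i ∈ terminalIndices n k := by
  simp only [mem_Sn] at hi ⊢
  rw [mem_terminalIndices]
  omega

lemma mem_Sn_of_mem_terminalIndices {n k : ℕ} (hk : 1 ≤ k) (hkn : 2 * k < n) {i : ℕ}
    (hi : i ∈ terminalIndices n k) : i ∈ Sn n := by
  rw [mem_Sn]
  rw [mem_terminalIndices] at hi
  omega

lemma Admissible.eq_one_of_mem_terminalIndices {n : ℕ} {m : ℕ → ℕ} (hm : Admissible n m)
    {k i : ℕ} (hk : 1 ≤ k) (hkn : 2 * k < n) (hi : i ∈ terminalIndices n k) : m i = 1 := by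
  refine hm.2.1 i (mem_Sn_of_mem_terminalIndices hk hkn hi) ?_
  rw [mem_Sn]
  rw [mem_terminalIndices] at hi
  omega

lemma tau_eq_image {n : ℕ} {m : ℕ → ℕ} (hm : Admissible n m) {v : ℕ × ℕ} (hv : 1 ≤ v.1)
    (hvn : 2 * v.1 < n) : tau n m v = (fun i => (i, 0)) '' ↑(terminalIndices n v.1) := by
  ext ⟨i, j⟩
  simp only [tau, Vnm, Set.mem_ofPred_eq, Set.mem_image, Finset.mem_coe, Prod.mk.injEq]
  constructor
  · rintro ⟨⟨hi, hj⟩, -, hsum⟩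
    have hT := (add_notMem_Sn_iff hv hi).1 hsum
    rw [hm.eq_one_of_mem_terminalIndices hv hvn hT] at hj
    exact ⟨i, hT, rfl, by omega⟩
  · rintro ⟨i, hT, rfl, rfl⟩
    have hi := mem_Sn_of_mem_terminalIndices hv hvn hT
    have hne : i ≠ v.1 := by rw [mem_terminalIndices] at hT; omega
    refine ⟨⟨hi, ?_⟩, fun h => hne (congrArg Prod.fst h), (add_notMem_Sn_iff hv hi).2 hT⟩
    rw [hm.eq_one_of_mem_terminalIndices hv hvn hT]
    exact Nat.one_pos

/-- For `n ≥ 39`, any admissible `m`, any `2 ≤ k ≤ 6` and any `v ∈ ψ(k)`,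
the vertex `v` has exactly `k` proper terminals, whose first coordinates are
pairwise distinct. -/
theorem proper_terminals_of_small_vertices (n : ℕ) (hn : 39 ≤ n) (m : ℕ → ℕ)
    (hm : Admissible n m) (k : ℕ) (hk2 : 2 ≤ k) (hk6 : k ≤ 6)
    (v : ℕ × ℕ) (hv : v ∈ psi m k) :
    Set.ncard (tau n m v) = k ∧
      ∀ w₁ ∈ tau n m v, ∀ w₂ ∈ tau n m v, w₁.1 = w₂.1 → w₁ = w₂ := by
  obtain ⟨rfl, -⟩ := hv
  have hτ := tau_eq_image hm (by omega) (by omega : 2 * v.1 < n)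
  have hinj : Function.Injective fun i : ℕ => (i, 0) := fun _ _ h => congrArg Prod.fst h
  refine ⟨?_, ?_⟩
  · rw [hτ, Set.ncard_image_of_injective _ hinj, Set.ncard_coe_finset,
      card_terminalIndices hk2 (by omega)]
  · rw [hτ]
    rintro _ ⟨i₁, -, rfl⟩ _ ⟨i₂, -, rfl⟩ h
    rw [show i₁ = i₂ from h]
end
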